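/- arXiv:1411.7208 — 2 statements merged into one kernel-verified Lean document; each statement's English description precedes it below -/
import Mathlib

section
/- Let m ≥ 13 and n ≥ 13 be integers with m ≡ 2 (mod 3) and n not congruent to 2 mod 3. Then γ_sR(Cₘ ∨ Cₙ) = 3. -/
open Finset SimpleGraph
open scoped Classical

/-- The sum of `f` over the closed neighborhood of `v` in `G`. -/
noncomputable def closedNbrSum {V : Type*} [Fintype V] (G : SimpleGraph V)
    (f : V → ℤ) (v : V) : ℤ :=
  ∑ u ∈ Finset.univ.filter (fun u => u = v ∨ G.Adj v u), f u

/-- `f` is a signed Roman dominating function on `G`. -/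
def IsSRDF {V : Type*} [Fintype V] (G : SimpleGraph V) (f : V → ℤ) : Prop :=
  (∀ v, f v = -1 ∨ f v = 1 ∨ f v = 2) ∧
  (∀ v, 1 ≤ closedNbrSum G f v) ∧
  (∀ v, f v = -1 → ∃ u, G.Adj v u ∧ f u = 2)

/-- The signed Roman domination number of `G`. -/
noncomputable def gammaSR {V : Type*} [Fintype V] (G : SimpleGraph V) : ℤ :=
  sInf {w : ℤ | ∃ f, IsSRDF G f ∧ w = ∑ v, f v}

/-- The join of two graphs. -/
def graphJoin {V W : Type*} (G : SimpleGraph V) (H : SimpleGraph W) :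
    SimpleGraph (V ⊕ W) where
  Adj x y :=
    match x, y with
    | .inl a, .inl b => G.Adj a b
    | .inr a, .inr b => H.Adj a b
    | _, _ => True
  symm := by
    constructor
    rintro (a | a) (b | b) h <;> simp_all <;> exact h.symm
  loopless := by
    constructor
    rintro (a | a) h <;> simp_all

/-!
Write `A` and `B` for the weights of a signed Roman dominating function `f` on the two cycles.
Summing the closed-neighbourhood condition over each cycle gives `m (1 - B) ≤ 3 A` and
`n (1 - A) ≤ 3 B`, which for `m, n ≥ 7` force `A + B ≥ 3` unless `A = B = 1`. In that case the
restriction `h` of `f` to `Cₙ` has weight `1` and nonnegative windows `h (v-1) + h v + h (v+1)`.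
If `n ≡ 1 (mod 3)`, the windows tiling `Cₙ` minus one vertex show `h ≤ 1`, so every window is odd,
hence at least `1`, and the `n` windows cannot sum to `3`. If `n ≡ 0 (mod 3)`, the windows tiling
`Cₙ` show that every window is at most `1`; then consecutive windows are equal, so `n` times a
window is `3`, which is impossible.

Weight `3` is attained by `2` on every third vertex of both cycles and `-1` elsewhere, except that
the last vertex of `Cₙ` gets `1` when `3 ∣ n`.
-/

lemma Finset.sum_range_three_mul {M : Type*} [AddCommMonoid M] (φ : ℕ → M) (q : ℕ) :
    ∑ i ∈ range (3 * q), φ i = ∑ k ∈ range q, (φ (3 * k) + φ (3 * k + 1) + φ (3 * k + 2)) := by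
  induction q with
  | zero => simp
  | succ q ih =>
    rw [show 3 * (q + 1) = 3 * q + 1 + 1 + 1 by ring, sum_range_succ, sum_range_succ,
      sum_range_succ, ih, sum_range_succ, add_assoc, add_assoc, add_assoc]

section GraphJoin

variable {V W : Type*} [Fintype V] [Fintype W]

lemma closedNbrSum_graphJoin_inl (G : SimpleGraph V) (H : SimpleGraph W)
    (f : V ⊕ W → ℤ) (a : V) :
    closedNbrSum (graphJoin G H) f (.inl a)
      = closedNbrSum G (f ∘ .inl) a + ∑ b, f (.inr b) := by
  simp only [closedNbrSum, sum_filter, Fintype.sum_sum_type]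
  congr 1
  · exact sum_congr rfl fun v _ => by simp [graphJoin]
  · exact sum_congr rfl fun w _ => by simp [graphJoin]

lemma closedNbrSum_graphJoin_inr (G : SimpleGraph V) (H : SimpleGraph W)
    (f : V ⊕ W → ℤ) (b : W) :
    closedNbrSum (graphJoin G H) f (.inr b)
      = closedNbrSum H (f ∘ .inr) b + ∑ a, f (.inl a) := by
  simp only [closedNbrSum, sum_filter, Fintype.sum_sum_type]
  rw [add_comm]
  congr 1
  · exact sum_congr rfl fun w _ => by simp [graphJoin]
  · exact sum_congr rfl fun v _ => by simp [graphJoin]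

end GraphJoin

section Cycle

open Fin.CommRing

variable {n : ℕ} [NeZero n]

lemma Fin.sum_univ_eq_sum_range_add {M : Type*} [AddCommMonoid M] (f : Fin n → M) (a : Fin n) :
    ∑ v, f v = ∑ i ∈ range n, f (a + (i : Fin n)) := by
  rw [← Equiv.sum_comp (Equiv.addLeft a) f,
    ← Fin.sum_univ_eq_sum_range (fun i => f (a + (i : Fin n))) n]
  simp

lemma Fin.apply_eq_apply_zero_of_forall_apply_add_one {α : Type*} (g : Fin n → α)
    (hg : ∀ c, g (c + 1) = g c) (v : Fin n) : g v = g 0 := by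
  suffices ∀ i : ℕ, g (i : Fin n) = g 0 by simpa using this v.val
  intro i
  induction i with
  | zero => simp
  | succ i ih => rw [Nat.cast_succ, hg, ih]

lemma closedNbrSum_cycleGraph (hn : 3 ≤ n) (f : Fin n → ℤ) (v : Fin n) :
    closedNbrSum (cycleGraph n) f v = f (v - 1) + f v + f (v + 1) := by
  obtain ⟨k, rfl⟩ : ∃ k, n = k + 3 := ⟨n - 3, by omega⟩
  have hnbr :
      univ.filter (fun u => u = v ∨ (cycleGraph (k + 3)).Adj v u) = {v - 1, v, v + 1} := by
    ext u
    have := Set.ext_iff.mp (cycleGraph_neighborSet (v := v)) u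
    simp only [mem_neighborSet, Set.mem_insert_iff, Set.mem_singleton_iff] at this
    simp only [mem_filter, mem_univ, true_and, mem_insert, mem_singleton, this]
    tauto
  have hne : v - 1 ≠ v + 1 ∧ v - 1 ≠ v ∧ v ≠ v + 1 := by
    simp only [ne_eq, sub_eq_iff_eq_add, add_assoc, left_eq_add]
    exact ⟨ne_of_beq_false rfl, ne_of_beq_false rfl, ne_of_beq_false rfl⟩
  rw [filter_congr_decidable] at hnbr
  rw [closedNbrSum, filter_congr_decidable]
  rw [hnbr, sum_insert (by simp [hne.1, hne.2.1]), sum_pair hne.2.2, add_assoc]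

lemma sum_closedNbrSum_cycleGraph (hn : 3 ≤ n) (f : Fin n → ℤ) :
    ∑ v, closedNbrSum (cycleGraph n) f v = 3 * ∑ v, f v := by
  have hshift (c : Fin n) : ∑ v, f (v + c) = ∑ v, f v := Equiv.sum_comp (Equiv.addRight c) f
  simp only [closedNbrSum_cycleGraph hn, sum_add_distrib, sub_eq_add_neg, hshift]
  ring

lemma closedNbrSum_cycleGraph_nonneg (hn : 3 ≤ n) (f : Fin n → ℤ)
    (hf : ∀ v, -1 ≤ f v) (hf2 : ∀ v : Fin n, v.val % 3 = 0 → f v = 2) (v : Fin n) :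
    0 ≤ closedNbrSum (cycleGraph n) f v := by
  have hwindow : (v - 1).val % 3 = 0 ∨ v.val % 3 = 0 ∨ (v + 1).val % 3 = 0 := by
    obtain ⟨k, rfl⟩ : ∃ k, n = k + 1 := ⟨n - 1, by omega⟩
    by_cases h0 : v = 0
    · simp [h0]
    by_cases hlast : v = Fin.last k
    · simp [hlast]
    rw [Fin.coe_sub_one, if_neg h0, Fin.val_add_one, if_neg hlast]
    rw [Fin.ext_iff, Fin.val_zero] at h0
    rw [Fin.ext_iff, Fin.val_last] at hlast
    omega
  rw [closedNbrSum_cycleGraph hn]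
  have := hf (v - 1); have := hf v; have := hf (v + 1)
  rcases hwindow with h | h | h <;> linarith [hf2 _ h]

lemma sum_range_three_mul_eq_sum_closedNbrSum_cycleGraph (hn : 3 ≤ n) (h : Fin n → ℤ)
    (a : Fin n) (q : ℕ) :
    ∑ i ∈ range (3 * q), h (a + (i : Fin n))
      = ∑ k ∈ range q, closedNbrSum (cycleGraph n) h (a + 3 * (k : Fin n) + 1) := by
  rw [sum_range_three_mul]
  refine sum_congr rfl fun k _ => ?_
  rw [closedNbrSum_cycleGraph hn]
  push_cast
  ring_nf

lemma sum_ne_one_of_closedNbrSum_nonneg_of_three_dvd (hn : 4 ≤ n) (hn3 : 3 ∣ n)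
    (h : Fin n → ℤ) (hv : ∀ v, h v = -1 ∨ h v = 1 ∨ h v = 2)
    (hT : ∀ v, 0 ≤ closedNbrSum (cycleGraph n) h v) :
    ∑ v, h v ≠ 1 := by
  intro hsum
  obtain ⟨q, hq⟩ : ∃ q, n = 3 * (q + 1) := ⟨n / 3 - 1, by omega⟩
  set T := closedNbrSum (cycleGraph n) h with hT_def
  have hT_eq (c : Fin n) : T c = h (c - 1) + h c + h (c + 1) :=
    closedNbrSum_cycleGraph (by omega) h c
  have hT_le (c : Fin n) : T c ≤ 1 := by
    have hdec : ∑ v, h v = ∑ i ∈ range (3 * (q + 1)), h (c - 1 + (i : Fin n)) := by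
      rw [← hq]; exact Fin.sum_univ_eq_sum_range_add h (c - 1)
    rw [hsum, sum_range_three_mul_eq_sum_closedNbrSum_cycleGraph (by omega)] at hdec
    have := single_le_sum (f := fun k : ℕ => closedNbrSum (cycleGraph n) h (c - 1 + 3 * k + 1))
      (fun k _ => hT _) (mem_range.mpr q.succ_pos)
    simpa [← hdec] using this
  -- `T (c + 1) - T c = h (c + 2) - h (c - 1)`, and both windows lie in `[0, 1]`.
  have hT_succ (c : Fin n) : T (c + 1) = T c := by
    have h1 := hT c; have h2 := hT (c + 1); have h3 := hT_le c; have h4 := hT_le (c + 1)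
    rw [hT_eq, add_sub_cancel_right] at h2 h4 ⊢
    rw [hT_eq] at h1 h3 ⊢
    rcases hv (c - 1) with e1 | e1 | e1 <;> rcases hv c with e2 | e2 | e2 <;>
      rcases hv (c + 1) with e3 | e3 | e3 <;> rcases hv (c + 1 + 1) with e4 | e4 | e4 <;>
      omega
  have hT_sum : ∑ c, T c = 3 := by
    rw [hT_def, sum_closedNbrSum_cycleGraph (by omega), hsum, mul_one]
  simp only [Fin.apply_eq_apply_zero_of_forall_apply_add_one T hT_succ, sum_const, card_univ,
    Fintype.card_fin, nsmul_eq_mul] at hT_sum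
  rcases (by have := hT 0; have := hT_le 0; omega : T 0 = 0 ∨ T 0 = 1) with h0 | h0 <;>
    rw [h0] at hT_sum <;> omega

lemma sum_ne_one_of_closedNbrSum_nonneg_of_mod_three_eq_one (hn : 4 ≤ n) (hn3 : n % 3 = 1)
    (h : Fin n → ℤ) (hv : ∀ v, h v = -1 ∨ h v = 1 ∨ h v = 2)
    (hT : ∀ v, 0 ≤ closedNbrSum (cycleGraph n) h v) :
    ∑ v, h v ≠ 1 := by
  intro hsum
  obtain ⟨q, hq⟩ : ∃ q, n = 3 * q + 1 := ⟨n / 3, by omega⟩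
  have hh_le (a : Fin n) : h a ≤ 1 := by
    have hdec : ∑ v, h v = ∑ i ∈ range (3 * q + 1), h (a + (i : Fin n)) := by
      rw [← hq]; exact Fin.sum_univ_eq_sum_range_add h a
    have hshift : ∑ i ∈ range (3 * q), h (a + ((i + 1 : ℕ) : Fin n))
        = ∑ i ∈ range (3 * q), h (a + 1 + (i : Fin n)) :=
      sum_congr rfl fun i _ => by push_cast; ring_nf
    rw [sum_range_succ', hsum, hshift,
      sum_range_three_mul_eq_sum_closedNbrSum_cycleGraph (by omega), Nat.cast_zero,
      add_zero] at hdec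
    have := sum_nonneg fun (k : ℕ) (_ : k ∈ range q) => hT (a + 1 + 3 * (k : Fin n) + 1)
    omega
  have hT_pos (c : Fin n) : 1 ≤ closedNbrSum (cycleGraph n) h c := by
    have := hT c
    rw [closedNbrSum_cycleGraph (by omega)] at this ⊢
    have := hh_le (c - 1); have := hh_le c; have := hh_le (c + 1)
    rcases hv (c - 1) with e1 | e1 | e1 <;> rcases hv c with e2 | e2 | e2 <;>
      rcases hv (c + 1) with e3 | e3 | e3 <;> omega
  have := card_nsmul_le_sum univ _ 1 fun c _ => hT_pos c
  rw [sum_closedNbrSum_cycleGraph (by omega), hsum] at this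
  simp only [card_univ, Fintype.card_fin, nsmul_eq_mul, mul_one] at this
  omega

lemma sum_ne_one_of_closedNbrSum_cycleGraph_nonneg (hn : 4 ≤ n) (hn3 : n % 3 ≠ 2)
    (h : Fin n → ℤ) (hv : ∀ v, h v = -1 ∨ h v = 1 ∨ h v = 2)
    (hT : ∀ v, 0 ≤ closedNbrSum (cycleGraph n) h v) :
    ∑ v, h v ≠ 1 := by
  rcases (by omega : n % 3 = 0 ∨ n % 3 = 1) with hn0 | hn1
  · exact sum_ne_one_of_closedNbrSum_nonneg_of_three_dvd hn (Nat.dvd_of_mod_eq_zero hn0) h hv hT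
  · exact sum_ne_one_of_closedNbrSum_nonneg_of_mod_three_eq_one hn hn1 h hv hT

end Cycle

lemma eq_one_of_mul_one_sub_le {m n A B : ℤ} (hm : 7 ≤ m) (hn : 7 ≤ n)
    (hA : m * (1 - B) ≤ 3 * A) (hB : n * (1 - A) ≤ 3 * B) (hAB : A + B ≤ 2) :
    A = 1 ∧ B = 1 := by
  have hB1 : 1 ≤ B := by
    by_contra!
    nlinarith
  have hA1 : 1 ≤ A := by
    by_contra!
    nlinarith
  omega

lemma three_le_sum_of_isSRDF_graphJoin_cycleGraph {m n : ℕ} (hm : 7 ≤ m) (hn : 7 ≤ n)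
    (hn3 : n % 3 ≠ 2) (f : Fin m ⊕ Fin n → ℤ)
    (hf : IsSRDF (graphJoin (cycleGraph m) (cycleGraph n)) f) :
    3 ≤ ∑ v, f v := by
  have : NeZero m := ⟨by omega⟩
  have : NeZero n := ⟨by omega⟩
  obtain ⟨hvals, hnbr, -⟩ := hf
  set A := ∑ a, f (.inl a)
  set B := ∑ b, f (.inr b)
  have hA : (m : ℤ) * (1 - B) ≤ 3 * A := by
    have := card_nsmul_le_sum univ (closedNbrSum (cycleGraph m) (f ∘ .inl)) (1 - B)
      fun a _ => by have := hnbr (.inl a); rw [closedNbrSum_graphJoin_inl] at this; omega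
    rwa [sum_closedNbrSum_cycleGraph (by omega), card_univ, Fintype.card_fin,
      nsmul_eq_mul] at this
  have hB : (n : ℤ) * (1 - A) ≤ 3 * B := by
    have := card_nsmul_le_sum univ (closedNbrSum (cycleGraph n) (f ∘ .inr)) (1 - A)
      fun b _ => by have := hnbr (.inr b); rw [closedNbrSum_graphJoin_inr] at this; omega
    rwa [sum_closedNbrSum_cycleGraph (by omega), card_univ, Fintype.card_fin,
      nsmul_eq_mul] at this
  rw [Fintype.sum_sum_type]
  by_contra! hlt
  obtain ⟨hA1, hB1⟩ := eq_one_of_mul_one_sub_le (by omega) (by omega) hA hB (by omega)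
  refine sum_ne_one_of_closedNbrSum_cycleGraph_nonneg (by omega) hn3 (f ∘ .inr)
    (fun b => hvals _) (fun b => ?_) hB1
  have := hnbr (.inr b)
  rw [closedNbrSum_graphJoin_inr] at this
  linarith [show ∑ a, f (.inl a) = 1 from hA1]

def tripleWeight (i : ℕ) : ℤ := if i % 3 = 0 then 2 else -1

lemma neg_one_le_tripleWeight (i : ℕ) : -1 ≤ tripleWeight i := by
  unfold tripleWeight; split_ifs <;> norm_num

lemma tripleWeight_of_mod_three_eq_zero {i : ℕ} (hi : i % 3 = 0) : tripleWeight i = 2 :=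
  if_pos hi

lemma sum_range_tripleWeight (N : ℕ) :
    ∑ i ∈ range N, tripleWeight i = 3 * ((N + 2) / 3 : ℕ) - N := by
  induction N with
  | zero => simp
  | succ N ih =>
    rw [sum_range_succ, ih, tripleWeight]
    split_ifs <;> push_cast <;> omega

lemma exists_isSRDF_graphJoin_cycleGraph_sum_eq_three {m n : ℕ} (hm : 3 ≤ m) (hn : 3 ≤ n)
    (hm3 : m % 3 = 2) (hn3 : n % 3 ≠ 2) :
    ∃ f, IsSRDF (graphJoin (cycleGraph m) (cycleGraph n)) f ∧ ∑ v, f v = 3 := by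
  have : NeZero m := ⟨by omega⟩
  have : NeZero n := ⟨by omega⟩
  let g (i : ℕ) : ℤ := if i % 3 ≠ 0 ∧ i + 1 = n then 1 else tripleWeight i
  let f : Fin m ⊕ Fin n → ℤ := Sum.elim (fun a => tripleWeight a) (fun b => g b)
  have hA : ∑ a : Fin m, tripleWeight a = 1 := by
    rw [Fin.sum_univ_eq_sum_range tripleWeight, sum_range_tripleWeight]
    omega
  have hB : ∑ b : Fin n, g b = 2 := by
    obtain ⟨N, rfl⟩ : ∃ N, n = N + 1 := ⟨n - 1, by omega⟩
    have hlt : ∑ i ∈ range N, g i = ∑ i ∈ range N, tripleWeight i :=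
      sum_congr rfl fun i hi => by simp [g, (mem_range.mp hi).ne]
    rw [Fin.sum_univ_eq_sum_range g, sum_range_succ, hlt, sum_range_tripleWeight]
    simp only [g, tripleWeight, and_true]
    split_ifs <;> omega
  refine ⟨f, ⟨?_, ?_, ?_⟩, ?_⟩
  · rintro (a | b) <;> simp only [f, g, tripleWeight, Sum.elim_inl, Sum.elim_inr] <;>
      split_ifs <;> norm_num
  · have hg : ∀ i, -1 ≤ g i := fun i => by
      simp only [g]; split_ifs <;> simp [neg_one_le_tripleWeight]
    rintro (a | b)
    · have := closedNbrSum_cycleGraph_nonneg hm (f ∘ .inl)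
        (fun a => neg_one_le_tripleWeight a) (fun a => tripleWeight_of_mod_three_eq_zero) a
      rw [closedNbrSum_graphJoin_inl]
      linarith [show ∑ b, f (.inr b) = 2 from hB]
    · have := closedNbrSum_cycleGraph_nonneg hn (f ∘ .inr) (fun b => hg b)
        (fun b hb => by simp [f, g, hb, tripleWeight_of_mod_three_eq_zero]) b
      rw [closedNbrSum_graphJoin_inr]
      linarith [show ∑ a, f (.inl a) = 1 from hA]
  · rintro (a | b) -
    · exact ⟨.inr ⟨0, by omega⟩, trivial, by simp [f, g, tripleWeight]⟩
    · exact ⟨.inl ⟨0, by omega⟩, trivial, by simp [f, tripleWeight]⟩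
  · rw [Fintype.sum_sum_type]
    simp only [f, Sum.elim_inl, Sum.elim_inr, hA, hB]
    norm_num

theorem stmt8 (m n : ℕ) (hm : 13 ≤ m) (hn : 13 ≤ n)
    (hm3 : m % 3 = 2) (hn3 : n % 3 ≠ 2) :
    gammaSR (graphJoin (cycleGraph m) (cycleGraph n)) = 3 := by
  refine IsLeast.csInf_eq ⟨?_, ?_⟩
  · obtain ⟨f, hf, hsum⟩ :=
      exists_isSRDF_graphJoin_cycleGraph_sum_eq_three (by omega) (by omega) hm3 hn3
    exact ⟨f, hf, hsum.symm⟩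
  · rintro w ⟨f, hf, rfl⟩
    exact three_le_sum_of_isSRDF_graphJoin_cycleGraph (by omega) (by omega) hn3 f hf
end

section
/- Let m ≥ 13 and n ≥ 13. If f is an optimal signed Roman dominating function on Cₘ ∨ Cₙ such that the restriction of f to Cₘ has closed-neighborhood sum at most −1 at some vertex x of Cₘ, then γ_sR(Cₘ ∨ Cₙ) ≥ 3. -/
open Finset SimpleGraph
open scoped Classical

/-!
Write `S₁` and `S₂` for the weights of `f` on `Cₘ` and `Cₙ`. Domination at the vertex `x` of `Cₘ`
gives `S₂ ≥ 1 - (-1) = 2`. Summing the domination condition over the vertices of `Cₙ`, in which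
every closed neighbourhood has three vertices, gives `n ≤ n S₁ + 3 S₂`. If `S₁ ≥ 1` the weight
`S₁ + S₂` is at least `3`; otherwise `S₂ ≥ n (1 - S₁) / 3`, and `n ≥ 13` again forces
`S₁ + S₂ ≥ 3`. Since `f` is optimal, its weight is `γ_sR`.
-/

lemma closedNbrSum_eq_add_sum_neighborFinset {V : Type*} [Fintype V] (G : SimpleGraph V)
    [DecidableRel G.Adj] (f : V → ℤ) (v : V) :
    closedNbrSum G f v = f v + ∑ u ∈ G.neighborFinset v, f u := by
  simp only [closedNbrSum, neighborFinset_eq_filter, sum_filter]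
  rw [← Fintype.sum_ite_eq' v f, ← sum_add_distrib]
  refine sum_congr rfl fun u _ => ?_
  by_cases h : u = v
  · subst h; simp
  · simp [h]

lemma sum_closedNbrSum_of_isRegularOfDegree {V : Type*} [Fintype V] {G : SimpleGraph V}
    [DecidableRel G.Adj] {d : ℕ} (hG : G.IsRegularOfDegree d) (f : V → ℤ) :
    ∑ v, closedNbrSum G f v = (d + 1) * ∑ v, f v := by
  have hswap : ∑ v, ∑ u ∈ G.neighborFinset v, f u = ∑ u, d * f u := calc
    _ = ∑ u, ∑ v ∈ G.neighborFinset u, f u := by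
      simp only [neighborFinset_eq_filter, sum_filter]
      rw [sum_comm]
      simp only [adj_comm]
    _ = ∑ u, d * f u := by
      simp only [sum_const, card_neighborFinset_eq_degree, hG.degree_eq, nsmul_eq_mul]
  simp only [closedNbrSum_eq_add_sum_neighborFinset, sum_add_distrib, hswap, ← mul_sum]
  ring

lemma cycleGraph_isRegularOfDegree_two {n : ℕ} (hn : 3 ≤ n) :
    (cycleGraph n).IsRegularOfDegree 2 := by
  obtain ⟨k, rfl⟩ := Nat.exists_eq_add_of_le' hn
  exact fun _ => cycleGraph_degree_three_le

section graphJoin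

variable {V W : Type*} [Fintype V] [Fintype W] (G : SimpleGraph V) (H : SimpleGraph W)
  (f : V ⊕ W → ℤ)

lemma closedNbrSum_graphJoin_inl_s16 (v : V) :
    closedNbrSum (graphJoin G H) f (Sum.inl v)
      = closedNbrSum G (fun a => f (Sum.inl a)) v + ∑ w, f (Sum.inr w) := by
  simp only [closedNbrSum, sum_filter, Fintype.sum_sum_type]
  congr 1 <;> refine sum_congr rfl fun u _ => ?_ <;> simp [graphJoin, eq_comm]

lemma closedNbrSum_graphJoin_inr_s16 (w : W) :
    closedNbrSum (graphJoin G H) f (Sum.inr w)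
      = ∑ v, f (Sum.inl v) + closedNbrSum H (fun b => f (Sum.inr b)) w := by
  simp only [closedNbrSum, sum_filter, Fintype.sum_sum_type]
  congr 1 <;> refine sum_congr rfl fun u _ => ?_ <;> simp [graphJoin, eq_comm]

end graphJoin

theorem stmt16_general (m n : ℕ) (hn : 13 ≤ n)
    (f : Fin m ⊕ Fin n → ℤ)
    (hf : IsSRDF (graphJoin (cycleGraph m) (cycleGraph n)) f)
    (hopt : ∑ v, f v = gammaSR (graphJoin (cycleGraph m) (cycleGraph n)))
    (x : Fin m) (hx : closedNbrSum (cycleGraph m) (fun a => f (Sum.inl a)) x ≤ -1) :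
    3 ≤ gammaSR (graphJoin (cycleGraph m) (cycleGraph n)) := by
  obtain ⟨-, hdom, -⟩ := hf
  have hSn : 2 ≤ ∑ b, f (Sum.inr b) := by
    have := hdom (Sum.inl x)
    rw [closedNbrSum_graphJoin_inl_s16] at this
    omega
  have hcount : (n : ℤ) ≤ n * ∑ a, f (Sum.inl a) + 3 * ∑ b, f (Sum.inr b) := calc
    (n : ℤ) = ∑ _ : Fin n, 1 := by simp
    _ ≤ ∑ y, (∑ a, f (Sum.inl a) + closedNbrSum (cycleGraph n) (fun b => f (Sum.inr b)) y) :=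
      sum_le_sum fun y _ => by
        simpa only [closedNbrSum_graphJoin_inr_s16] using hdom (Sum.inr y)
    _ = n * ∑ a, f (Sum.inl a) + 3 * ∑ b, f (Sum.inr b) := by
      rw [sum_add_distrib, sum_closedNbrSum_of_isRegularOfDegree
        (cycleGraph_isRegularOfDegree_two (n := n) (by omega))]
      simp
  have hn' : (13 : ℤ) ≤ n := by exact_mod_cast hn
  rw [← hopt, Fintype.sum_sum_type]
  nlinarith

theorem stmt16 (m n : ℕ) (hm : 13 ≤ m) (hn : 13 ≤ n)
    (f : Fin m ⊕ Fin n → ℤ)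
    (hf : IsSRDF (graphJoin (cycleGraph m) (cycleGraph n)) f)
    (hopt : ∑ v, f v = gammaSR (graphJoin (cycleGraph m) (cycleGraph n)))
    (x : Fin m) (hx : closedNbrSum (cycleGraph m) (fun a => f (Sum.inl a)) x ≤ -1) :
    3 ≤ gammaSR (graphJoin (cycleGraph m) (cycleGraph n)) :=
  stmt16_general m n hn f hf hopt x hx
end
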